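/- Let I be a support-2 monomial ideal in K[x1,x2,x3] whose underlying graph is the triangle C_3 on vertices x_i, x_j, x_k. If I has at least two minimal generators supported on {x_i,x_j} and at least two supported on {x_j,x_k}, then the maximal ideal ⟨x_i, x_j, x_k⟩ is an associated prime of I. -/

import Mathlib

/-!
Take the generator `g` on the edge `{i, j}` whose `x_j`-exponent is the least one, `ν_{j,i}`.
Any other generator `g'` on that edge has a larger `x_j`-exponent, hence a smaller `x_i`-exponent.
The monomial `w = g / x_i` is a proper divisor of a minimal generator, so `w ∉ I`, while
`x_i w = g`, `g' ∣ x_j^{g'_j} w`, and, when `ν_{j,k} ≤ ν_{j,i}`, the generator `h` on `{j, k}` with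
`x_j`-exponent `ν_{j,k}` divides `x_k^{h_k} w`. Hence `⟨x_i, x_j, x_k⟩` is the radical of `I : w`,
which is how Mathlib defines an associated prime of `S/I`. The case `ν_{j,i} ≤ ν_{j,k}` is the same
with `i` and `k` exchanged.
-/

set_option synthInstance.maxHeartbeats 1000000
set_option maxHeartbeats 1000000

open MvPolynomial

section Defs

variable {K : Type*} [Field K] {σ : Type*}

/-- `I` is a monomial ideal. -/
def IsMonomialIdeal (I : Ideal (MvPolynomial σ K)) : Prop :=
  ∃ A : Set (σ →₀ ℕ), I = Ideal.span ((fun a => (monomial a (1 : K) : MvPolynomial σ K)) '' A)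

/-- Exponent vectors of the minimal monomial generators of `I`. -/
def minGens (I : Ideal (MvPolynomial σ K)) : Set (σ →₀ ℕ) :=
  {a | (monomial a (1 : K) : MvPolynomial σ K) ∈ I ∧
    ∀ b : σ →₀ ℕ, (monomial b (1 : K) : MvPolynomial σ K) ∈ I → b ≤ a → b = a}

/-- A support-2 monomial ideal: every minimal monomial generator is supported
on exactly two variables. -/
def IsSupportTwo (I : Ideal (MvPolynomial σ K)) : Prop :=
  ∀ a ∈ minGens I, a.support.card = 2

variable [DecidableEq σ]

/-- Minimal monomial generators of `I` supported on `{i, j}`. -/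
def supportedOn (I : Ideal (MvPolynomial σ K)) (i j : σ) : Set (σ →₀ ℕ) :=
  {a | a ∈ minGens I ∧ a.support = {i, j}}

/-- `ν_{i,j}`: the minimum exponent of `x_i` among the minimal generators of `I`
supported on `{i, j}`. -/
noncomputable def nuExp (I : Ideal (MvPolynomial σ K)) (i j : σ) : ℕ :=
  sInf ((fun a => a i) '' supportedOn I i j)

/-- `μ_{i,j}`: the maximum exponent of `x_i` among the minimal generators of `I`
supported on `{i, j}`. -/
noncomputable def muExp (I : Ideal (MvPolynomial σ K)) (i j : σ) : ℕ :=
  sSup ((fun a => a i) '' supportedOn I i j)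

/-- The underlying simple graph `G(I)` of a support-2 monomial ideal. -/
def underGraph (I : Ideal (MvPolynomial σ K)) : SimpleGraph σ where
  Adj i j := i ≠ j ∧ (supportedOn I i j).Nonempty
  symm := ⟨by
    rintro i j ⟨hij, a, hmin, hs⟩
    exact ⟨hij.symm, a, hmin, by rw [hs, Finset.pair_comm]⟩⟩
  loopless := ⟨fun i h => h.1 rfl⟩

end Defs

section Symbolic

variable {R : Type*} [CommRing R]

/-- The component of `I` at a prime `P`, namely `I S_P ∩ S`. -/
noncomputable def localizedComponent (I P : Ideal R) (hP : P.IsPrime) : Ideal R :=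
  letI := hP
  (I.map (algebraMap R (Localization.AtPrime P))).comap
    (algebraMap R (Localization.AtPrime P))

/-- The `s`-th symbolic power `I^{(s)} = ⋂_{P ∈ MinAss(I)} (I^s S_P ∩ S)`. -/
noncomputable def symbolicPower (I : Ideal R) (s : ℕ) : Ideal R :=
  ⨅ P : I.minimalPrimes, localizedComponent (I ^ s) P.1 P.2.1.1

/-- A Simis ideal: `I^{(s)} = I^s` for all `s ≥ 1`. -/
def IsSimis (I : Ideal R) : Prop := ∀ s : ℕ, 1 ≤ s → symbolicPower I s = I ^ s

/-- `I` has no embedded associated primes. -/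
def NoEmbeddedPrimes (I : Ideal R) : Prop :=
  ∀ P ∈ associatedPrimes R (R ⧸ I), P ∈ I.minimalPrimes

end Symbolic

section Decomp

variable {K : Type*} [Field K] {σ : Type*}

/-- An irreducible monomial ideal: generated by pure powers of variables. -/
def IsIrredMonomialIdeal (Q : Ideal (MvPolynomial σ K)) : Prop :=
  ∃ (t : Finset σ) (e : σ → ℕ), (∀ i ∈ t, 1 ≤ e i) ∧
    Q = Ideal.span ((fun i => (X i : MvPolynomial σ K) ^ e i) '' t)

/-- `I` has a minimal (irredundant, distinct radicals) irreducible decomposition. -/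
def HasMinimalIrredDecomp (I : Ideal (MvPolynomial σ K)) : Prop :=
  ∃ (r : ℕ) (Q : Fin r → Ideal (MvPolynomial σ K)),
    (∀ k, IsIrredMonomialIdeal (Q k)) ∧ I = ⨅ k, Q k ∧
    (∀ k, (⨅ l ∈ ({k}ᶜ : Set (Fin r)), Q l) ≠ I) ∧
    (∀ k l, k ≠ l → (Q k).radical ≠ (Q l).radical)

/-- The ideal obtained from `J` by the standard linear weighting `x_i ↦ x_i^{d_i}`. -/
noncomputable def weightedIdeal (d : σ → ℕ) (J : Ideal (MvPolynomial σ K)) : Ideal (MvPolynomial σ K) :=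
  Ideal.span {m | ∃ a ∈ minGens J, ∃ b : σ →₀ ℕ,
    (∀ i, b i = d i * a i) ∧ m = (monomial b (1 : K) : MvPolynomial σ K)}

/-- `I` has a standard linear weighting: there are `d_i ≥ 1` such that every
minimal generator supported on `{i,j}` is `x_i^{d_i} x_j^{d_j}`. -/
def HasStdWeighting (I : Ideal (MvPolynomial σ K)) : Prop :=
  ∃ d : σ → ℕ, (∀ i, 1 ≤ d i) ∧ ∀ a ∈ minGens I, ∀ i ∈ a.support, a i = d i

variable (K) in
/-- The edge ideal of a simple graph. -/
noncomputable def edgeIdeal (G : SimpleGraph σ) : Ideal (MvPolynomial σ K) :=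
  Ideal.span {m | ∃ i j, G.Adj i j ∧ m = (X i * X j : MvPolynomial σ K)}

end Decomp

section Graph

variable {σ : Type*}

/-- A vertex cover of a simple graph. -/
def IsVertexCover (G : SimpleGraph σ) (C : Set σ) : Prop :=
  ∀ ⦃i j⦄, G.Adj i j → i ∈ C ∨ j ∈ C

/-- A minimal vertex cover of a simple graph. -/
def IsMinimalVertexCover (G : SimpleGraph σ) (C : Set σ) : Prop :=
  IsVertexCover G C ∧ ∀ D ⊆ C, IsVertexCover G D → D = C

end Graph

section CM

variable {K : Type*} [Field K] {σ : Type*}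

/-- The depth of `S/I` with respect to the irrelevant maximal ideal
`⟨x_1, …, x_n⟩`: the supremum of lengths of regular sequences on `S/I`
consisting of elements of that ideal. -/
noncomputable def quotDepth (I : Ideal (MvPolynomial σ K)) : ℕ∞ :=
  sSup {n : ℕ∞ | ∃ rs : List (MvPolynomial σ K), (rs.length : ℕ∞) = n ∧
    (∀ r ∈ rs, r ∈ Ideal.span (Set.range (X : σ → MvPolynomial σ K))) ∧
    RingTheory.Sequence.IsRegular (MvPolynomial σ K ⧸ I)
      (rs.map (Ideal.Quotient.mk I))}

/-- `S/I` is Cohen–Macaulay: depth equals Krull dimension. -/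
def IsCohenMacaulayQuot (I : Ideal (MvPolynomial σ K)) : Prop :=
  (quotDepth I : WithBot ℕ∞) = ringKrullDim (MvPolynomial σ K ⧸ I)

/-- The height of a prime ideal, as the Krull dimension of the localization. -/
noncomputable def primeHeight' {R : Type*} [CommRing R] (P : Ideal R) (hP : P.IsPrime) :
    WithBot ℕ∞ :=
  letI := hP
  ringKrullDim (Localization.AtPrime P)

/-- `I` is unmixed: all associated primes of `S/I` have the same height. -/
def IsUnmixed {R : Type*} [CommRing R] (I : Ideal R) : Prop :=
  ∀ P, ∀ hP : P ∈ associatedPrimes R (R ⧸ I), ∀ Q, ∀ hQ : Q ∈ associatedPrimes R (R ⧸ I),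
    primeHeight' P hP.1 = primeHeight' Q hQ.1

end CM


theorem Ideal.mem_associatedPrimes_of_le_radical_colon {R : Type*} [CommRing R] {I P : Ideal R}
    (hP : P.IsMaximal) {w : R} (hw : w ∉ I) (hPw : P ≤ (I.colon {w}).radical) :
    P ∈ associatedPrimes R (R ⧸ I) := by
  have hcolon : (⊥ : Submodule R (R ⧸ I)).colon {Ideal.Quotient.mk I w} = I.colon {w} := by
    ext r
    simp only [Submodule.mem_colon_singleton, Submodule.mem_bot, smul_eq_mul]
    exact Ideal.Quotient.eq_zero_iff_mem
  refine ⟨hP.isPrime, Ideal.Quotient.mk I w, hP.eq_of_le ?_ (hcolon ▸ hPw)⟩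
  rw [hcolon, Ne, Ideal.radical_eq_top, Ideal.eq_top_iff_one, Submodule.mem_colon_singleton,
    one_smul]
  exact hw

namespace MvPolynomial

theorem idealOfVars_eq_ker_constantCoeff (σ K : Type*) [Field K] :
    idealOfVars σ K = RingHom.ker (constantCoeff : MvPolynomial σ K →+* K) := by
  ext p
  rw [← pow_one (idealOfVars σ K), mem_pow_idealOfVars_iff', RingHom.mem_ker, constantCoeff_eq]
  simp [Finsupp.degree_eq_zero_iff]

theorem idealOfVars_isMaximal (σ K : Type*) [Field K] : (idealOfVars σ K).IsMaximal := by
  rw [idealOfVars_eq_ker_constantCoeff]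
  exact RingHom.ker_isMaximal_of_surjective _ fun x => ⟨C x, constantCoeff_C σ x⟩

theorem span_X_eq_idealOfVars_of_fin_three (K : Type*) [Field K] {i j k : Fin 3}
    (hij : i ≠ j) (hjk : j ≠ k) (hik : i ≠ k) :
    Ideal.span {(X i : MvPolynomial (Fin 3) K), X j, X k} = idealOfVars (Fin 3) K := by
  have hall : ∀ u, u = i ∨ u = j ∨ u = k := by
    revert i j k
    decide
  refine congrArg Ideal.span (Set.ext fun p => ⟨?_, ?_⟩)
  · rintro (rfl | rfl | rfl) <;> exact ⟨_, rfl⟩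
  · rintro ⟨u, rfl⟩
    rcases hall u with rfl | rfl | rfl <;> simp

end MvPolynomial

section Monomials

open Finsupp

variable {K : Type*} [Field K] {σ : Type*} {I : Ideal (MvPolynomial σ K)}

theorem monomial_mem_of_le {g e : σ →₀ ℕ} (hg : monomial g (1 : K) ∈ I) (hge : g ≤ e) :
    monomial e (1 : K) ∈ I := by
  rw [← tsub_add_cancel_of_le hge, ← one_mul (1 : K), ← monomial_mul]
  exact I.mul_mem_left _ hg

theorem X_mem_radical_colon {g w : σ →₀ ℕ} {u : σ} {n : ℕ} (hg : monomial g (1 : K) ∈ I)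
    (hle : g ≤ single u n + w) :
    X u ∈ (I.colon {monomial w (1 : K)}).radical :=
  ⟨n, by
    rw [Submodule.mem_colon_singleton, smul_eq_mul, X_pow_eq_monomial, monomial_mul, one_mul]
    exact monomial_mem_of_le hg hle⟩

end Monomials

section SupportedOn

open Finsupp

variable {K : Type*} [Field K] {σ : Type*} [DecidableEq σ] {I : Ideal (MvPolynomial σ K)}

theorem supportedOn_comm (i j : σ) : supportedOn I i j = supportedOn I j i := by
  ext a
  simp only [supportedOn, Set.mem_ofPred_eq, Finset.pair_comm]

variable {i j : σ} {a b : σ →₀ ℕ}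

theorem le_iff_of_support_eq_pair {e : σ →₀ ℕ} (ha : a.support = {i, j}) :
    a ≤ e ↔ a i ≤ e i ∧ a j ≤ e j := by
  simp [le_iff, ha]

theorem apply_pos_of_mem_supportedOn (ha : a ∈ supportedOn I i j) : 0 < a i ∧ 0 < a j := by
  simp [Nat.pos_iff_ne_zero, ← Finsupp.mem_support_iff, ha.2]

theorem eq_of_mem_supportedOn_of_le (ha : a ∈ supportedOn I i j) (hb : b ∈ supportedOn I i j)
    (hi : a i ≤ b i) (hj : a j ≤ b j) : a = b :=
  hb.1.2 a ha.1.1 ((le_iff_of_support_eq_pair ha.2).mpr ⟨hi, hj⟩)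

theorem apply_lt_of_mem_supportedOn (ha : a ∈ supportedOn I i j) (hb : b ∈ supportedOn I i j)
    (hab : a ≠ b) (hi : a i ≤ b i) : b j < a j :=
  lt_of_not_ge fun hj => hab (eq_of_mem_supportedOn_of_le ha hb hi hj)

theorem nuExp_le (ha : a ∈ supportedOn I i j) : nuExp I i j ≤ a i :=
  Nat.sInf_le ⟨a, ha, rfl⟩

theorem exists_apply_eq_nuExp (ha : a ∈ supportedOn I i j) :
    ∃ g ∈ supportedOn I i j, g i = nuExp I i j :=
  Nat.sInf_mem (s := (fun g => g i) '' supportedOn I i j) ⟨a i, a, ha, rfl⟩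

theorem exists_monomial_notMem_X_mem_radical_colon {k : σ} {c : σ →₀ ℕ} (hij : i ≠ j)
    (ha : a ∈ supportedOn I i j) (hb : b ∈ supportedOn I i j) (hab : a ≠ b)
    (hc : c ∈ supportedOn I j k) (hν : nuExp I j k ≤ nuExp I j i) :
    ∃ w : σ →₀ ℕ, monomial w (1 : K) ∉ I ∧
      X i ∈ (I.colon {monomial w (1 : K)}).radical ∧
      X j ∈ (I.colon {monomial w (1 : K)}).radical ∧
      X k ∈ (I.colon {monomial w (1 : K)}).radical := by
  rw [supportedOn_comm] at ha hb
  obtain ⟨g, hg, hgj⟩ := exists_apply_eq_nuExp ha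
  obtain ⟨h, hh, hhj⟩ := exists_apply_eq_nuExp hc
  obtain ⟨g', hg', hgg'⟩ : ∃ g' ∈ supportedOn I j i, g ≠ g' := by
    by_cases hga : g = a
    · exact ⟨b, hb, hga ▸ hab⟩
    · exact ⟨a, ha, hga⟩
  have hgi : 0 < g i := (apply_pos_of_mem_supportedOn hg).2
  have hg'i : g' i < g i := apply_lt_of_mem_supportedOn hg hg' hgg' (hgj ▸ nuExp_le hg')
  refine ⟨g - single i 1, fun hwI => ?_,
    X_mem_radical_colon (n := 1) hg.1.1 ((le_iff_of_support_eq_pair hg.2).mpr ?_),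
    X_mem_radical_colon (n := g' j) hg'.1.1 ((le_iff_of_support_eq_pair hg'.2).mpr ?_),
    X_mem_radical_colon (n := h k) hh.1.1 ((le_iff_of_support_eq_pair hh.2).mpr ?_)⟩
  · have hgi' := congrArg (· i) (hg.1.2 _ hwI tsub_le_self)
    simp only [tsub_apply, single_eq_same] at hgi'
    omega
  all_goals
    simp only [Finsupp.add_apply, tsub_apply, single_eq_same, single_eq_of_ne, hij.symm, Ne,
      not_false_eq_true]
    omega

end SupportedOn

theorem span_X_mem_associatedPrimes_of_fin_three {K : Type*} [Field K]
    {I : Ideal (MvPolynomial (Fin 3) K)} {i j k : Fin 3} (hij : i ≠ j) (hjk : j ≠ k) (hik : i ≠ k)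
    {w : Fin 3 →₀ ℕ} (hw : monomial w (1 : K) ∉ I)
    (hi : X i ∈ (I.colon {monomial w (1 : K)}).radical)
    (hj : X j ∈ (I.colon {monomial w (1 : K)}).radical)
    (hk : X k ∈ (I.colon {monomial w (1 : K)}).radical) :
    Ideal.span {(X i : MvPolynomial (Fin 3) K), X j, X k} ∈
      associatedPrimes (MvPolynomial (Fin 3) K) (MvPolynomial (Fin 3) K ⧸ I) := by
  refine Ideal.mem_associatedPrimes_of_le_radical_colon ?_ hw ?_
  · rw [span_X_eq_idealOfVars_of_fin_three K hij hjk hik]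
    exact idealOfVars_isMaximal (Fin 3) K
  · rw [Ideal.span_le]
    rintro _ (rfl | rfl | rfl) <;> assumption

theorem stmt16_general {K : Type*} [Field K] (I : Ideal (MvPolynomial (Fin 3) K))
    (i j k : Fin 3) (hij : i ≠ j) (hjk : j ≠ k) (hik : i ≠ k)
    (a b : Fin 3 →₀ ℕ) (ha : a ∈ supportedOn I i j)
    (hb : b ∈ supportedOn I i j) (hab : a ≠ b)
    (c d : Fin 3 →₀ ℕ) (hc : c ∈ supportedOn I j k)
    (hd : d ∈ supportedOn I j k) (hcd : c ≠ d) :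
    Ideal.span {(X i : MvPolynomial (Fin 3) K), X j, X k} ∈
      associatedPrimes (MvPolynomial (Fin 3) K) (MvPolynomial (Fin 3) K ⧸ I) := by
  rcases le_total (nuExp I j k) (nuExp I j i) with hν | hν
  · obtain ⟨w, hwI, hi, hj, hk⟩ := exists_monomial_notMem_X_mem_radical_colon hij ha hb hab hc hν
    exact span_X_mem_associatedPrimes_of_fin_three hij hjk hik hwI hi hj hk
  · rw [supportedOn_comm] at ha hc hd
    obtain ⟨w, hwI, hk, hj, hi⟩ :=
      exists_monomial_notMem_X_mem_radical_colon hjk.symm hc hd hcd ha hν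
    exact span_X_mem_associatedPrimes_of_fin_three hij hjk hik hwI hi hj hk

theorem stmt16 {K : Type*} [Field K] (I : Ideal (MvPolynomial (Fin 3) K))
    (hmon : IsMonomialIdeal I) (h2 : IsSupportTwo I)
    (i j k : Fin 3) (hij : i ≠ j) (hjk : j ≠ k) (hik : i ≠ k)
    (htri : ∀ u v : Fin 3, (underGraph I).Adj u v ↔ u ≠ v)
    (a b : Fin 3 →₀ ℕ) (ha : a ∈ supportedOn I i j)
    (hb : b ∈ supportedOn I i j) (hab : a ≠ b)
    (c d : Fin 3 →₀ ℕ) (hc : c ∈ supportedOn I j k)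
    (hd : d ∈ supportedOn I j k) (hcd : c ≠ d) :
    Ideal.span {(X i : MvPolynomial (Fin 3) K), X j, X k} ∈
      associatedPrimes (MvPolynomial (Fin 3) K) (MvPolynomial (Fin 3) K ⧸ I) :=
  stmt16_general I i j k hij hjk hik a b ha hb hab c d hc hd hcd
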